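/- arXiv:1707.03488 — 5 statements merged into one kernel-verified Lean document; each statement's English description precedes it below -/
import Mathlib

section
/- Fix a, b > 0 and s ∈ (−1, 1). Define y(x) = (2b/π)·arcsin(s·(cos(πx/(2a)))^((a/b)²)) for x ∈ (−a, a). Then for every x ∈ (−a, a), y is differentiable at x with derivative y'(x) = −(a/b)·tan(πx/(2a))·tan(π·y(x)/(2b)); that is, y solves the separable ODE satisfied by the gradient flow lines of the eigenfunction ψ_{a,b}(x₁,x₂) = 2 sin(πx₁/(2a)) cos(πx₂/(2b)). -/
/-!
Write `y x = (2b/π) F(πx/(2a))` with `F u = arcsin (s cos u ^ c)` and `c = (a/b)²`.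
The logarithmic derivative of `cos u ^ c` is `-c tan u`, and `arcsin' t = 1/√(1 - t²)` turns the
factor `t = s cos u ^ c` into `t/√(1 - t²) = tan (arcsin t)`. Hence `F' u = -c tan u tan (F u)`,
and the chain rule rescales `c` by `(2b/π)(π/(2a)) = b/a`, leaving `a/b`.
-/

open Real

lemma abs_mul_rpow_lt_one {s r c : ℝ} (hs : |s| < 1) (hr₀ : 0 ≤ r) (hr₁ : r ≤ 1) (hc : 0 ≤ c) :
    |s * r ^ c| < 1 := by
  rw [abs_mul, abs_of_nonneg (rpow_nonneg hr₀ c)]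
  calc |s| * r ^ c ≤ |s| * 1 := by gcongr; exact rpow_le_one hr₀ hr₁ hc
    _ < 1 := by rwa [mul_one]

lemma hasDerivAt_cos_rpow {u : ℝ} (c : ℝ) (hu : 0 < cos u) :
    HasDerivAt (fun u => cos u ^ c) (-c * tan u * cos u ^ c) u := by
  refine ((hasDerivAt_cos u).rpow_const (p := c) (Or.inl hu.ne')).congr_deriv ?_
  rw [tan_eq_sin_div_cos, rpow_sub_one hu.ne']
  field_simp

lemma hasDerivAt_arcsin_mul_cos_rpow {s c u : ℝ} (hu : 0 < cos u) (ht : |s * cos u ^ c| < 1) :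
    HasDerivAt (fun u => arcsin (s * cos u ^ c))
      (-c * tan u * tan (arcsin (s * cos u ^ c))) u := by
  obtain ⟨ht₁, ht₂⟩ := abs_lt.mp ht
  have hroot : sqrt (1 - (s * cos u ^ c) ^ 2) ≠ 0 := by
    have : 0 < 1 - (s * cos u ^ c) ^ 2 := by nlinarith
    positivity
  refine ((hasDerivAt_arcsin ht₁.ne' ht₂.ne).comp u
    ((hasDerivAt_cos_rpow c hu).const_mul s)).congr_deriv ?_
  rw [tan_arcsin]
  field_simp

theorem gradient_flow_line_ode (a b s : ℝ) (ha : 0 < a) (hb : 0 < b)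
    (hs : s ∈ Set.Ioo (-1 : ℝ) 1)
    (y : ℝ → ℝ)
    (hy : ∀ x, y x = (2 * b / π) * arcsin (s * cos (π * x / (2 * a)) ^ ((a / b) ^ 2))) :
    ∀ x ∈ Set.Ioo (-a) a,
      HasDerivAt y (-(a / b) * tan (π * x / (2 * a)) * tan (π * y x / (2 * b))) x := by
  intro x ⟨hx₁, hx₂⟩
  set c := (a / b) ^ 2 with hc
  set u := π * x / (2 * a)
  have hu : u ∈ Set.Ioo (-(π / 2)) (π / 2) := by
    constructor
    · rw [lt_div_iff₀ (by positivity)]; nlinarith [pi_pos]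
    · rw [div_lt_iff₀ (by positivity)]; nlinarith [pi_pos]
  have hcos : 0 < cos u := cos_pos_of_mem_Ioo hu
  have ht : |s * cos u ^ c| < 1 :=
    abs_mul_rpow_lt_one (abs_lt.mpr hs) hcos.le (cos_le_one u) (by positivity)
  have hlin : HasDerivAt (fun x : ℝ => π * x / (2 * a)) (π / (2 * a)) x := by
    simpa using ((hasDerivAt_id x).const_mul π).div_const (2 * a)
  have hF := ((hasDerivAt_arcsin_mul_cos_rpow hcos ht).comp x hlin).const_mul (2 * b / π)
  have hyx : π * y x / (2 * b) = arcsin (s * cos u ^ c) := by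
    rw [hy x]; field_simp; rfl
  rw [hyx, show y = _ from funext hy]
  refine hF.congr_deriv ?_
  rw [hc]
  field_simp
end

section
/- Fix a, b > 0. For every x ∈ (0, a), the function γ_{a,b} is differentiable at x and γ_{a,b}'(x) = −(a/b)·tan(πx/(2a))·tan(π·γ_{a,b}(x)/(2b)). -/
/-!
Write `u = πx/(2a)`, `k = (a/b)²` and `t = (cos u)^k`, so that `πγ(x)/(2b) = arcsin t`.
Differentiating `arcsin (f^k)` in logarithmic form gives `k (f'/f) · t/√(1 - t²)`, and
`t/√(1 - t²) = tan (arcsin t)`. For `f = cos u` the logarithmic derivative is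
`-(π/(2a)) tan u`, and `(2b/π) · k · (π/(2a)) = a/b`.
-/

open Real

/-- The boundary curve of the star-like Neumann domain. -/
noncomputable def gammaAB (a b x : ℝ) : ℝ :=
  (2 * b / π) * arcsin (cos (π * x / (2 * a)) ^ ((a / b) ^ 2))

theorem HasDerivAt.arcsin_rpow {f : ℝ → ℝ} {f' x : ℝ} (k : ℝ) (hf : HasDerivAt f f' x)
    (hfx : 0 < f x) (hne : f x ^ k ≠ 1) :
    HasDerivAt (fun y => arcsin (f y ^ k)) (k * (f' / f x) * tan (arcsin (f x ^ k))) x := by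
  have hpow : 0 < f x ^ k := rpow_pos_of_pos hfx k
  have hchain := (hasDerivAt_arcsin (by linarith) hne).comp x (hf.rpow_const (Or.inl hfx.ne'))
  refine hchain.congr_deriv ?_
  rw [tan_arcsin, rpow_sub_one hfx.ne']
  field_simp

theorem pi_mul_gammaAB_div (a : ℝ) {b : ℝ} (hb : b ≠ 0) (x : ℝ) :
    π * gammaAB a b x / (2 * b) = arcsin (cos (π * x / (2 * a)) ^ ((a / b) ^ 2)) := by
  rw [gammaAB]
  field_simp

theorem pi_mul_div_mem_Ioo {a x : ℝ} (ha : 0 < a) (hx : x ∈ Set.Ioo 0 a) :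
    π * x / (2 * a) ∈ Set.Ioo 0 (π / 2) := by
  obtain ⟨hx0, hxa⟩ := hx
  constructor
  · positivity
  · rw [div_lt_div_iff₀ (by positivity) two_pos]
    nlinarith [pi_pos]

theorem cos_mem_Ioo_zero_one {u : ℝ} (hu : u ∈ Set.Ioo 0 (π / 2)) : cos u ∈ Set.Ioo 0 1 := by
  obtain ⟨hu0, huπ⟩ := hu
  refine ⟨cos_pos_of_mem_Ioo ⟨by linarith [pi_pos], huπ⟩, ?_⟩
  simpa using cos_lt_cos_of_nonneg_of_le_pi le_rfl (by linarith [pi_pos]) hu0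

theorem gamma_ode (a b : ℝ) (ha : 0 < a) (hb : 0 < b) :
    ∀ x ∈ Set.Ioo (0 : ℝ) a,
      HasDerivAt (gammaAB a b)
        (-(a / b) * tan (π * x / (2 * a)) * tan (π * gammaAB a b x / (2 * b))) x := by
  intro x hx
  obtain ⟨hcos0, hcos1⟩ := cos_mem_Ioo_zero_one (pi_mul_div_mem_Ioo ha hx)
  have hk : 0 < (a / b) ^ 2 := by positivity
  have hcos : HasDerivAt (fun y => cos (π * y / (2 * a)))
      (-sin (π * x / (2 * a)) * (π / (2 * a))) x := by
    have hlin : HasDerivAt (fun y : ℝ => π * y / (2 * a)) (π / (2 * a)) x := by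
      simpa using ((hasDerivAt_id x).const_mul π).div_const (2 * a)
    exact hlin.cos
  have harcsin := (hcos.arcsin_rpow ((a / b) ^ 2) hcos0
    (rpow_lt_one hcos0.le hcos1 hk).ne).const_mul (2 * b / π)
  refine harcsin.congr_deriv ?_
  rw [pi_mul_gammaAB_div a hb.ne', tan_eq_sin_div_cos (π * x / (2 * a))]
  field_simp
end

section
/- For every real α ≥ 1, the function f(x) = arcsin((cos x)^α) is convex on the interval [0, π/2]. Consequently, for all 0 < b ≤ a, the boundary function γ_{a,b} is convex on [0, a]. -/
open Real Set

lemma sqrt_slope_rpow_inv_sq {α c s : ℝ} (hα : 0 ≤ α) (hc : 0 < c) (hs : 0 < s)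
    (hcs : c ^ 2 + s ^ 2 = 1) :
    √(slope (· ^ α) 1 (c ^ 2)⁻¹) = c * √(1 - (c ^ α) ^ 2) / (c ^ α * s) := by
  have hw : 0 < c ^ α := rpow_pos_of_pos hc α
  have hw1 : c ^ α ≤ 1 := rpow_le_one hc.le (by nlinarith) hα
  have hsec : (c ^ 2)⁻¹ - 1 = s ^ 2 / c ^ 2 := by
    field_simp
    linarith
  have hslope : slope (· ^ α) 1 (c ^ 2)⁻¹ = (c * √(1 - (c ^ α) ^ 2) / (c ^ α * s)) ^ 2 := by
    rw [slope_def_field, hsec, inv_rpow (by positivity), ← rpow_pow_comm hc.le, one_rpow,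
      div_pow, mul_pow, mul_pow, sq_sqrt (by nlinarith)]
    field_simp
  rw [hslope, sqrt_sq (by positivity)]

lemma hasDerivAt_arcsin_cos_rpow {α x : ℝ} (hα : 0 < α) (hx : x ∈ Ioo 0 (π / 2)) :
    HasDerivAt (fun x => arcsin (cos x ^ α)) (-(α / √(slope (· ^ α) 1 (cos x ^ 2)⁻¹))) x := by
  have hc : 0 < cos x := cos_pos_of_mem_Ioo ⟨by linarith [hx.1, pi_pos], hx.2⟩
  have hs : 0 < sin x := sin_pos_of_pos_of_lt_pi hx.1 (by linarith [hx.2, pi_pos])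
  have hw : 0 < cos x ^ α := rpow_pos_of_pos hc α
  have hw1 : cos x ^ α < 1 := rpow_lt_one hc.le (by nlinarith [sin_sq_add_cos_sq x]) hα
  have hq : 0 < √(1 - (cos x ^ α) ^ 2) := sqrt_pos.2 (by nlinarith)
  refine ((hasDerivAt_arcsin (by linarith) hw1.ne).comp x
    ((hasDerivAt_cos x).rpow_const (p := α) (Or.inl hc.ne'))).congr_deriv ?_
  rw [sqrt_slope_rpow_inv_sq hα.le hc hs (cos_sq_add_sin_sq x), rpow_sub_one hc.ne']
  field_simp

lemma one_lt_inv_cos_sq {x : ℝ} (hx : x ∈ Ioo 0 (π / 2)) : 1 < (cos x ^ 2)⁻¹ := by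
  have hc : 0 < cos x := cos_pos_of_mem_Ioo ⟨by linarith [hx.1, pi_pos], hx.2⟩
  have hs : 0 < sin x := sin_pos_of_pos_of_lt_pi hx.1 (by linarith [hx.2, pi_pos])
  rw [one_lt_inv₀ (by positivity)]
  nlinarith [sin_sq_add_cos_sq x]

theorem convexOn_arcsin_cos_rpow {α : ℝ} (hα : 1 ≤ α) :
    ConvexOn ℝ (Icc 0 (π / 2)) (fun x => arcsin (cos x ^ α)) := by
  have hα₀ : 0 < α := by linarith
  have hderiv x (hx : x ∈ Ioo 0 (π / 2)) := hasDerivAt_arcsin_cos_rpow hα₀ hx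
  refine MonotoneOn.convexOn_of_deriv (convex_Icc _ _)
    (continuous_arcsin.comp (continuous_cos.rpow_const fun _ => Or.inr hα₀.le)).continuousOn
    (fun x hx => ?_) (fun x hx y hy hxy => ?_) <;> rw [interior_Icc] at *
  · exact (hderiv x hx).differentiableAt.differentiableWithinAt
  have hsec : (cos x ^ 2)⁻¹ ≤ (cos y ^ 2)⁻¹ := by
    have hcy : 0 < cos y := cos_pos_of_mem_Ioo ⟨by linarith [hy.1, pi_pos], hy.2⟩
    gcongr
    exact cos_le_cos_of_nonneg_of_le_pi hx.1.le (by linarith [hy.2, pi_pos]) hxy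
  have hx1 := one_lt_inv_cos_sq hx
  have hy1 := one_lt_inv_cos_sq hy
  have hslope_pos : (0 : ℝ) < slope (· ^ α) 1 (cos x ^ 2)⁻¹ := by
    rw [slope_def_field]
    exact div_pos (by simpa using one_lt_rpow hx1 hα₀) (sub_pos.2 hx1)
  have hslope_mono := (convexOn_rpow hα).slope_mono (mem_Ici.2 zero_le_one)
    ⟨mem_Ici.2 (by positivity), hx1.ne'⟩ ⟨mem_Ici.2 (by positivity), hy1.ne'⟩ hsec
  rw [(hderiv x hx).deriv, (hderiv y hy).deriv]
  gcongr

theorem arcsin_cos_rpow_convex :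
    (∀ α : ℝ, 1 ≤ α →
        ConvexOn ℝ (Set.Icc 0 (π / 2)) (fun x : ℝ => arcsin (cos x ^ α))) ∧
      ∀ a b : ℝ, 0 < b → b ≤ a → ConvexOn ℝ (Set.Icc 0 a) (gammaAB a b) := by
  refine ⟨fun α hα => convexOn_arcsin_cos_rpow hα, fun a b hb hba => ?_⟩
  have ha : 0 < a := hb.trans_le hba
  have hα : 1 ≤ (a / b) ^ 2 := one_le_pow₀ ((one_le_div hb).2 hba)
  let rescale : ℝ →ₗ[ℝ] ℝ := LinearMap.lsmul ℝ ℝ (π / (2 * a))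
  have hmaps : Icc 0 a ⊆ rescale ⁻¹' Icc 0 (π / 2) := fun x ⟨hx₀, hxa⟩ => by
    have hscale : 0 ≤ π / (2 * a) := by positivity
    refine ⟨mul_nonneg hscale hx₀, ?_⟩
    calc π / (2 * a) * x ≤ π / (2 * a) * a := by gcongr
      _ = π / 2 := by field_simp
  refine ((((convexOn_arcsin_cos_rpow hα).comp_linearMap rescale).subset hmaps
    (convex_Icc 0 a)).smul (c := 2 * b / π) (by positivity)).congr fun x _ => ?_
  simp only [gammaAB, rescale, Function.comp_apply, LinearMap.lsmul_apply, smul_eq_mul,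
    div_mul_eq_mul_div]
end

section
/- For all a, b > 0, the function x ↦ (cos(πx/(2a)))^((a/b)²)·exp(π²x²/(8b²)) is strictly decreasing on [0, a); equivalently, R_b is strictly increasing on [0, a). -/
/-!
Writing `u = πx/(2a)` and `c = (a/b)²`, the function is `(cos u · exp (u²/2)) ^ c`.
Since `c > 0`, it suffices that `cos u · exp (u²/2)` decreases strictly on `[0, π/2)`,
and its derivative `exp (u²/2) · (u cos u - sin u)` is negative there because `u < tan u`.
-/

open Real Set

theorem mul_cos_lt_sin {u : ℝ} (h0 : 0 < u) (h1 : u < π / 2) : u * cos u < sin u := by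
  have hcos : 0 < cos u := cos_pos_of_mem_Ioo ⟨by linarith, h1⟩
  simpa [tan_mul_cos hcos.ne'] using mul_lt_mul_of_pos_right (lt_tan h0 h1) hcos

theorem strictAntiOn_cos_mul_exp_sq_div_two :
    StrictAntiOn (fun u : ℝ => cos u * exp (u ^ 2 / 2)) (Ico 0 (π / 2)) := by
  refine strictAntiOn_of_deriv_neg (convex_Ico 0 (π / 2)) (by fun_prop) fun u hu => ?_
  rw [interior_Ico] at hu
  have hderiv : HasDerivAt (fun u : ℝ => cos u * exp (u ^ 2 / 2))
      (exp (u ^ 2 / 2) * (u * cos u - sin u)) u := by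
    refine ((hasDerivAt_cos u).fun_mul ((hasDerivAt_pow 2 u).div_const 2).exp).congr_deriv ?_
    push_cast
    ring
  rw [hderiv.deriv]
  exact mul_neg_of_pos_of_neg (exp_pos _) (sub_neg.2 (mul_cos_lt_sin hu.1 hu.2))

theorem cos_mul_exp_sq_div_two_nonneg {u : ℝ} (hu : u ∈ Ico 0 (π / 2)) :
    0 ≤ cos u * exp (u ^ 2 / 2) :=
  mul_nonneg (cos_nonneg_of_mem_Icc ⟨by linarith [pi_pos, hu.1], hu.2.le⟩) (exp_pos _).le

theorem strictAntiOn_cos_mul_exp_sq_div_two_rpow {c : ℝ} (hc : 0 < c) :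
    StrictAntiOn (fun u : ℝ => (cos u * exp (u ^ 2 / 2)) ^ c) (Ico 0 (π / 2)) :=
  (strictMonoOn_rpow_Ici_of_exponent_pos hc).comp_strictAntiOn
    strictAntiOn_cos_mul_exp_sq_div_two fun _ hu => cos_mul_exp_sq_div_two_nonneg hu

theorem cos_mul_exp_sq_div_two_rpow {u : ℝ} (hu : 0 ≤ cos u) (c : ℝ) :
    (cos u * exp (u ^ 2 / 2)) ^ c = cos u ^ c * exp (c * (u ^ 2 / 2)) := by
  rw [mul_rpow hu (exp_pos _).le, ← exp_mul, mul_comm c]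

theorem cos_rpow_mul_exp_strictAnti (a b : ℝ) (ha : 0 < a) (hb : 0 < b) :
    StrictAntiOn
      (fun x : ℝ => cos (π * x / (2 * a)) ^ ((a / b) ^ 2) * exp (π ^ 2 * x ^ 2 / (8 * b ^ 2)))
      (Set.Ico 0 a) := by
  have hscale : StrictMonoOn (fun x : ℝ => π * x / (2 * a)) (Ico 0 a) := fun x _ y _ hxy => by
    dsimp only
    gcongr
  have hmaps : MapsTo (fun x : ℝ => π * x / (2 * a)) (Ico 0 a) (Ico 0 (π / 2)) := fun x hx => by
    refine ⟨by have := hx.1; positivity, ?_⟩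
    rw [div_lt_iff₀ (by positivity)]
    nlinarith [pi_pos, hx.2]
  have hc : 0 < (a / b) ^ 2 := by positivity
  refine ((strictAntiOn_cos_mul_exp_sq_div_two_rpow hc).comp_strictMonoOn hscale hmaps).congr
    fun x hx => ?_
  have hu := hmaps hx
  simp only [Function.comp_apply]
  rw [cos_mul_exp_sq_div_two_rpow (cos_nonneg_of_mem_Icc ⟨by linarith [pi_pos, hu.1], hu.2.le⟩)]
  congr 2
  field_simp
  ring
end

section
/- Fix a, b > 0. Then γ_{a,b}(x) − (b − |x|) = O(|x|³) as x → 0; that is, at the point w = (0, b) the star-like Neumann domain has a wedge with opening angle π/2. -/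
/-!
Put `r = a / b` and `θ = π x / (2 a)`, so that `γ(x) - (b - |x|) = -(2b/π) (arccos (cos θ ^ r²) - |r θ|)`.
Since `log (cos s) = -s²/2 + O(s⁴)`, the numbers `cos θ ^ r² = exp (r² log (cos θ))` and
`cos (r θ) = exp (log (cos (r θ)))` differ by `O(θ⁴)`. On `[0, π/2]` the sum-to-product formula and
Jordan's inequality give `t |φ - t| ≤ (π²/2) |cos φ - cos t|`; with `φ = arccos (cos θ ^ r²)` and
`t = |r θ|` this divides the `O(θ⁴)` by `θ`.
-/

open Real Asymptotics Filter

open Topology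

namespace Real

theorem abs_log_sub_sub_one_le {y : ℝ} (hy : 0 < y) : |log y - (y - 1)| ≤ (y - 1) ^ 2 / y := by
  have hlow := one_sub_inv_le_log_of_pos hy
  have hup := log_le_sub_one_of_pos hy
  have hgap : (y - 1) ^ 2 / y = (y - 1) - (1 - y⁻¹) := by field_simp
  rw [abs_of_nonpos (by linarith), hgap]
  linarith

theorem log_sub_sub_one_isBigO : (fun y => log y - (y - 1)) =O[𝓝 1] fun y => (y - 1) ^ 2 := by
  refine IsBigO.of_bound 2 ?_
  filter_upwards [Ioi_mem_nhds (by norm_num : (1 / 2 : ℝ) < 1)] with y hy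
  have hy : 1 / 2 < y := hy
  rw [norm_eq_abs, norm_eq_abs, abs_of_nonneg (sq_nonneg (y - 1))]
  calc |log y - (y - 1)| ≤ (y - 1) ^ 2 / y := abs_log_sub_sub_one_le (by linarith)
    _ ≤ 2 * (y - 1) ^ 2 := by
      rw [div_le_iff₀ (by linarith)]
      nlinarith [sq_nonneg (y - 1)]

theorem cos_sub_one_isBigO : (fun s => cos s - 1) =O[𝓝 0] fun s => s ^ 2 := by
  refine IsBigO.of_bound (1 / 2) (Eventually.of_forall fun s => ?_)
  rw [norm_eq_abs, norm_eq_abs, abs_of_nonpos (by linarith [cos_le_one s]),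
    abs_of_nonneg (sq_nonneg s)]
  linarith [one_sub_sq_div_two_le_cos (x := s)]

theorem cos_sub_one_sub_sq_div_two_isBigO :
    (fun s => cos s - (1 - s ^ 2 / 2)) =O[𝓝 0] fun s => s ^ 4 := by
  refine IsBigO.of_bound (5 / 96) ?_
  filter_upwards [Metric.closedBall_mem_nhds (0 : ℝ) one_pos] with s hs
  rw [Metric.mem_closedBall, dist_zero_right, norm_eq_abs] at hs
  rw [norm_eq_abs, norm_eq_abs, abs_pow, mul_comm]
  exact cos_bound hs

theorem log_cos_add_sq_div_two_isBigO :
    (fun s => log (cos s) + s ^ 2 / 2) =O[𝓝 0] fun s => s ^ 4 := by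
  have hcos : Tendsto cos (𝓝 0) (𝓝 1) := by simpa using continuous_cos.tendsto 0
  have hlog : (fun s => log (cos s) - (cos s - 1)) =O[𝓝 0] fun s => s ^ 4 := by
    simpa only [Function.comp_def, ← pow_mul] using
      (log_sub_sub_one_isBigO.comp_tendsto hcos).trans (cos_sub_one_isBigO.pow 2)
  refine (hlog.add cos_sub_one_sub_sq_div_two_isBigO).congr_left fun s => ?_
  ring

theorem rpow_cos_sub_cos_mul_isBigO (r : ℝ) :
    (fun θ => cos θ ^ (r ^ 2) - cos (r * θ)) =O[𝓝 0] fun θ => θ ^ 4 := by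
  have hexp : (fun p : ℝ × ℝ => exp p.1 - exp p.2) =O[𝓝 (0, 0)] fun p => p.1 - p.2 :=
    (hasStrictDerivAt_exp 0).hasStrictFDerivAt.isBigO_sub
  have hexponents :
      Tendsto (fun θ => (r ^ 2 * log (cos θ), log (cos (r * θ)))) (𝓝 0) (𝓝 (0, 0)) := by
    have : ContinuousAt (fun θ => (r ^ 2 * log (cos θ), log (cos (r * θ)))) 0 := by
      fun_prop (disch := simp)
    simpa using this.tendsto
  have hdiff : (fun θ => r ^ 2 * log (cos θ) - log (cos (r * θ))) =O[𝓝 0] fun θ => θ ^ 4 := by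
    have hmul : Tendsto (fun θ => r * θ) (𝓝 0) (𝓝 0) := by
      simpa using (continuous_const_mul r).tendsto 0
    have h₁ := log_cos_add_sq_div_two_isBigO.const_mul_left (r ^ 2)
    have h₂ : (fun θ => log (cos (r * θ)) + (r * θ) ^ 2 / 2) =O[𝓝 0] fun θ => θ ^ 4 :=
      (log_cos_add_sq_div_two_isBigO.comp_tendsto hmul).trans <| by
        simpa only [Function.comp_def, mul_pow] using
          (isBigO_refl (fun θ : ℝ => θ ^ 4) _).const_mul_left (r ^ 4)
    refine (h₁.sub h₂).congr_left fun θ => ?_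
    ring
  have hcos_pos : ∀ᶠ θ in 𝓝 0, 0 < cos θ ∧ 0 < cos (r * θ) :=
    (continuousAt_const.eventually_lt continuous_cos.continuousAt (by simp)).and
      (continuousAt_const.eventually_lt (by fun_prop) (by simp))
  refine ((hexp.comp_tendsto hexponents).trans hdiff).congr' ?_ (EventuallyEq.refl _ _)
  filter_upwards [hcos_pos] with θ ⟨h₁, h₂⟩
  simp only [Function.comp_apply, rpow_def_of_pos h₁, exp_log h₂, mul_comm]

theorem mul_abs_sub_le_abs_cos_sub_cos {φ t : ℝ} (hφ : φ ∈ Set.Icc 0 (π / 2))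
    (ht : t ∈ Set.Icc 0 (π / 2)) : t * |φ - t| ≤ π ^ 2 / 2 * |cos φ - cos t| := by
  obtain ⟨hφ₀, hφ₁⟩ := hφ
  obtain ⟨ht₀, ht₁⟩ := ht
  have hπ := pi_pos
  have hsum : t / π ≤ sin ((φ + t) / 2) :=
    calc t / π ≤ 2 / π * ((φ + t) / 2) := by
          rw [div_le_iff₀ hπ]
          field_simp
          linarith
      _ ≤ sin ((φ + t) / 2) := mul_le_sin (by linarith) (by linarith)
  have hdiff : |φ - t| / π ≤ |sin ((φ - t) / 2)| :=
    calc |φ - t| / π = 2 / π * |(φ - t) / 2| := by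
          rw [abs_div, abs_two]
          field_simp
      _ ≤ |sin ((φ - t) / 2)| :=
          mul_abs_le_abs_sin (by rw [abs_le]; constructor <;> linarith)
  have hsin_nonneg : 0 ≤ sin ((φ + t) / 2) := hsum.trans' (by positivity)
  calc t * |φ - t| = π ^ 2 * ((t / π) * (|φ - t| / π)) := by field_simp
    _ ≤ π ^ 2 * (sin ((φ + t) / 2) * |sin ((φ - t) / 2)|) := by gcongr
    _ = π ^ 2 / 2 * |cos φ - cos t| := by
        rw [cos_sub_cos, abs_mul, abs_mul, abs_neg, abs_two, abs_of_nonneg hsin_nonneg]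
        ring

theorem arccos_rpow_cos_sub_abs_mul_isBigO (r : ℝ) :
    (fun θ => arccos (cos θ ^ (r ^ 2)) - |r * θ|) =O[𝓝 0] fun θ => θ ^ 3 := by
  rcases eq_or_ne r 0 with rfl | hr
  · simpa using isBigO_zero _ _
  obtain ⟨c, hc⟩ := (rpow_cos_sub_cos_mul_isBigO r).bound
  have hcos : ∀ᶠ θ in 𝓝 0, 0 < cos θ :=
    continuousAt_const.eventually_lt continuous_cos.continuousAt (by simp)
  have hsmall : ∀ᶠ θ in 𝓝 0, |r * θ| ≤ π / 2 := by
    have : Tendsto (fun θ => |r * θ|) (𝓝 0) (𝓝 0) := by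
      simpa using ((continuous_const_mul r).abs).tendsto 0
    exact this.eventually (ge_mem_nhds pi_div_two_pos)
  refine IsBigO.of_bound (π ^ 2 / 2 * c / |r|) ?_
  filter_upwards [hc, hcos, hsmall] with θ hθc hθcos hθsmall
  rcases eq_or_ne θ 0 with rfl | hθ
  · simp
  set u := cos θ ^ (r ^ 2)
  have hu₀ : 0 ≤ u := rpow_nonneg hθcos.le _
  have hu₁ : u ≤ 1 := rpow_le_one hθcos.le (cos_le_one θ) (sq_nonneg r)
  have key := mul_abs_sub_le_abs_cos_sub_cos ⟨arccos_nonneg u, arccos_le_pi_div_two.2 hu₀⟩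
    ⟨abs_nonneg (r * θ), hθsmall⟩
  rw [cos_arccos (by linarith) hu₁, cos_abs] at key
  have hrθ : 0 < |r * θ| := abs_pos.2 (mul_ne_zero hr hθ)
  simp only [norm_eq_abs] at hθc ⊢
  refine le_of_mul_le_mul_left ?_ hrθ
  calc _ ≤ π ^ 2 / 2 * |u - cos (r * θ)| := key
    _ ≤ π ^ 2 / 2 * (c * |θ ^ 4|) := by gcongr
    _ = |r * θ| * (π ^ 2 / 2 * c / |r| * |θ ^ 3|) := by
        rw [abs_mul, abs_pow, abs_pow]
        field_simp

end Real

theorem gammaAB_sub_eq {a b : ℝ} (ha : a ≠ 0) (hb : 0 < b) (x : ℝ) :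
    gammaAB a b x - (b - |x|) = -(2 * b / π) *
      (arccos (cos (π * x / (2 * a)) ^ ((a / b) ^ 2)) - |a / b * (π * x / (2 * a))|) := by
  have hlin : a / b * (π * x / (2 * a)) = π / (2 * b) * x := by field_simp
  rw [gammaAB, arcsin_eq_pi_div_two_sub_arccos, hlin, abs_mul,
    abs_of_pos (by positivity : 0 < π / (2 * b))]
  field_simp
  ring

theorem gamma_wedge_asymptotics (a b : ℝ) (ha : 0 < a) (hb : 0 < b) :
    (fun x : ℝ => gammaAB a b x - (b - |x|)) =O[nhds 0] fun x : ℝ => |x| ^ 3 := by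
  have hθ : Tendsto (fun x : ℝ => π * x / (2 * a)) (𝓝 0) (𝓝 0) := by
    simpa using (continuous_const_mul π |>.div_const (2 * a)).tendsto 0
  have hθ_cube : (fun x : ℝ => (π * x / (2 * a)) ^ 3) =O[𝓝 0] fun x => |x| ^ 3 :=
    IsBigO.of_bound ((π / (2 * a)) ^ 3) <| Eventually.of_forall fun x => le_of_eq <| by
      simp only [norm_eq_abs, abs_pow, abs_abs, abs_div, abs_mul, abs_two, abs_of_pos pi_pos,
        abs_of_pos ha]
      ring
  refine (((arccos_rpow_cos_sub_abs_mul_isBigO (a / b)).comp_tendsto hθ).const_mul_left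
    (-(2 * b / π)) |>.trans hθ_cube).congr_left fun x => (gammaAB_sub_eq ha.ne' hb x).symm
end
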